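/- (Classical BBGKY hierarchy.) Assume the interaction kernel K satisfies (HK1)-(HK2). Let F_N^in be a symmetric Borel probability measure on (ℝ^d)^N with finite first moment, and set F_N(t) := T_t#F_N^in. Then for each j with 1 ≤ j ≤ N−1 and each φ ∈ C¹_b((ℝ^d)^j), one has, in the sense of distributions in t: (d/dt) ∫ φ(z_1,…,z_j) F_{N:j}(t)(dz_1…dz_j) = (1/N) ∑_{k,l=1}^{j} ∫ K(z_l,z_k)·∇_{z_l}φ(z_1,…,z_j) F_{N:j}(t)(dz_1…dz_j) + ((N−j)/N) ∑_{l=1}^{j} ∫ K(z_l,z_{j+1})·∇_{z_l}φ(z_1,…,z_j) F_{N:j+1}(t)(dz_1…dz_{j+1}), together with the initial conditions F_{N:j}(0) = F^in_{N:j}. -/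

import Mathlib

/-! The mean-field vector field is Lipschitz, so its flow `T_t` is Lipschitz and, by uniqueness
of solutions, commutes with permutations of the particles; hence `T_t#F` stays symmetric and
has a finite first moment. Differentiating `∫ φ(z_1,…,z_j) d(T_t#F)` under the integral sign
gives `(1/N) ∑_{l ≤ j} ∑_{k ≤ N} ∫ K(z_l,z_k)·∇_{z_l}φ d(T_t#F)`. By symmetry the law of
`(z_1,…,z_j,z_k)` is the `(j+1)`-marginal for every `k > j`, so these `N - j` terms coincide. -/

open MeasureTheory Real Filter Topology
open scoped ENNReal NNReal

noncomputable section

/-- A measure on `(ℝ^d)^N` is symmetric if it is invariant under every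
permutation of the coordinates. -/
def IsSymmetricMeasure {d N : ℕ} (P : Measure (Fin N → EuclideanSpace ℝ (Fin d))) :
    Prop :=
  ∀ σ : Equiv.Perm (Fin N),
    Measure.map (fun z (i : Fin N) => z (σ i)) P = P

theorem LipschitzWith.norm_le_norm_zero_add {E F : Type*} [SeminormedAddCommGroup E]
    [SeminormedAddCommGroup F] {f : F → E} {Lk : ℝ≥0} (hf : LipschitzWith Lk f) (x : F) :
    ‖f x‖ ≤ ‖f 0‖ + Lk * ‖x‖ := by
  have := hf.dist_le_mul x 0
  rw [dist_eq_norm, dist_eq_norm, sub_zero] at this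
  linarith [norm_le_insert' (f x) (f 0)]

theorem LipschitzWith.integrable_comp {α E F : Type*} [MeasurableSpace α] {μ : Measure α}
    [IsFiniteMeasure μ] [NormedAddCommGroup E] [NormedAddCommGroup F] {f : E → F} {Lk : ℝ≥0}
    (hf : LipschitzWith Lk f) {g : α → E} (hg : Integrable g μ) : Integrable (fun x => f (g x)) μ :=
  ((integrable_const ‖f 0‖).add (hg.norm.const_mul Lk)).mono'
    (hf.continuous.comp_aestronglyMeasurable hg.aestronglyMeasurable)
    (.of_forall fun x => hf.norm_le_norm_zero_add (g x))

theorem integrable_id_of_lintegral_sum_nnnorm_ne_top {ι E : Type*} [Fintype ι]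
    [NormedAddCommGroup E] [MeasurableSpace E] [BorelSpace E] [SecondCountableTopology E]
    {μ : Measure (ι → E)} (hμ : ∫⁻ Z, ∑ i, (‖Z i‖₊ : ℝ≥0∞) ∂μ ≠ ⊤) : Integrable id μ := by
  refine ⟨aestronglyMeasurable_id, (lintegral_mono fun Z => ?_).trans_lt hμ.lt_top⟩
  simp only [id, enorm_eq_nnnorm, ← ENNReal.ofNNReal_finsetSum, ENNReal.coe_le_coe]
  exact pi_nnnorm_le_iff.2 fun i =>
    Finset.single_le_sum (f := fun k => ‖Z k‖₊) (fun k _ => zero_le) (Finset.mem_univ i)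

theorem Fin.sum_univ_eq_sum_castLE_add_nsmul {M : Type*} [AddCommMonoid M] {j N : ℕ}
    (hjN : j < N) (f : Fin N → M) (hf : ∀ k : Fin N, j ≤ k → f k = f ⟨j, hjN⟩) :
    ∑ k, f k = ∑ k : Fin j, f (Fin.castLE hjN.le k) + (N - j) • f ⟨j, hjN⟩ := by
  let g : ℕ → M := fun k => if h : k < N then f ⟨k, h⟩ else 0
  have hg : ∀ k ∈ Finset.Ico j N, g k = f ⟨j, hjN⟩ := fun k hk => by
    obtain ⟨hjk, hkN⟩ := Finset.mem_Ico.1 hk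
    simp only [g, dif_pos hkN]
    exact hf _ hjk
  calc ∑ k, f k = ∑ k ∈ Finset.range N, g k := by
        rw [← Fin.sum_univ_eq_sum_range]
        exact Finset.sum_congr rfl fun k _ => by simp only [g, dif_pos k.2]
    _ = ∑ k ∈ Finset.range j, g k + ∑ k ∈ Finset.Ico j N, g k :=
        (Finset.sum_range_add_sum_Ico g hjN.le).symm
    _ = _ := by
        rw [Finset.sum_congr rfl hg, Finset.sum_const, Nat.card_Ico, ← Fin.sum_univ_eq_sum_range]
        exact congrArg (· + _) (Finset.sum_congr rfl fun k _ => by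
          simp only [g, dif_pos (k.2.trans hjN)]; rfl)

section MeanField

variable {E : Type*} [NormedAddCommGroup E] [NormedSpace ℝ E]

theorem lipschitzWith_of_norm_partialFDeriv_le {K : E × E → E} {L : ℝ}
    (hK : Differentiable ℝ K)
    (hK2 : (∀ z z' : E, ‖fderiv ℝ (fun w => K (w, z')) z‖ ≤ L) ∧
      (∀ z z' : E, ‖fderiv ℝ (fun w => K (z, w)) z'‖ ≤ L)) :
    LipschitzWith (2 * L).toNNReal K := by
  refine LipschitzWith.of_dist_le' fun ⟨a, b⟩ ⟨a', b'⟩ => ?_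
  have h₁ : ‖K (a, b) - K (a', b)‖ ≤ L * ‖a - a'‖ :=
    convex_univ.norm_image_sub_le_of_norm_fderiv_le
      (fun x _ => (hK.comp (differentiable_id.prodMk (differentiable_const b))) x)
      (fun x _ => hK2.1 x b) trivial trivial
  have h₂ : ‖K (a', b) - K (a', b')‖ ≤ L * ‖b - b'‖ :=
    convex_univ.norm_image_sub_le_of_norm_fderiv_le
      (fun x _ => (hK.comp ((differentiable_const a').prodMk differentiable_id)) x)
      (fun x _ => hK2.2 a' x) trivial trivial
  have ha : ‖a - a'‖ ≤ dist (a, b) (a', b') := by rw [← dist_eq_norm]; exact le_max_left _ _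
  have hb : ‖b - b'‖ ≤ dist (a, b) (a', b') := by rw [← dist_eq_norm]; exact le_max_right _ _
  have hL : 0 ≤ L := (norm_nonneg _).trans (hK2.1 a b)
  rw [dist_eq_norm]
  calc ‖K (a, b) - K (a', b')‖ ≤ ‖K (a, b) - K (a', b)‖ + ‖K (a', b) - K (a', b')‖ :=
        norm_sub_le_norm_sub_add_norm_sub _ _ _
    _ ≤ 2 * L * dist (a, b) (a', b') := by nlinarith

def meanField (K : E × E → E) (N : ℕ) (Z : Fin N → E) : Fin N → E :=
  fun i => (N : ℝ)⁻¹ • ∑ k, K (Z i, Z k)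

theorem lipschitzWith_meanField {K : E × E → E} {Lk : ℝ≥0} (hK : LipschitzWith Lk K)
    (N : ℕ) : LipschitzWith Lk (meanField K N) := by
  refine LipschitzWith.of_dist_le_mul fun Z Z' => (dist_pi_le_iff (by positivity)).2 fun i => ?_
  have hterm : ∀ k, dist (K (Z i, Z k)) (K (Z' i, Z' k)) ≤ Lk * dist Z Z' := fun k =>
    (hK.dist_le_mul _ _).trans <| mul_le_mul_of_nonneg_left
      (max_le (dist_le_pi_dist Z Z' i) (dist_le_pi_dist Z Z' k)) Lk.coe_nonneg
  calc dist (meanField K N Z i) (meanField K N Z' i)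
      = (N : ℝ)⁻¹ * dist (∑ k, K (Z i, Z k)) (∑ k, K (Z' i, Z' k)) := by
        rw [meanField, meanField, dist_smul₀, Real.norm_of_nonneg (by positivity)]
    _ ≤ (N : ℝ)⁻¹ * (N * (Lk * dist Z Z')) := by
        gcongr
        simpa using dist_sum_sum_le_of_le Finset.univ (fun k _ => hterm k)
    _ ≤ Lk * dist Z Z' := by
        rcases N.eq_zero_or_pos with rfl | hN
        · simp only [Nat.cast_zero, inv_zero, zero_mul]
          positivity
        · rw [inv_mul_cancel_left₀ (by positivity)]

theorem meanField_comp_perm (K : E × E → E) {N : ℕ} (σ : Equiv.Perm (Fin N)) (Z : Fin N → E) :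
    meanField K N (fun i => Z (σ i)) = fun i => meanField K N Z (σ i) := by
  funext i
  simp only [meanField, Equiv.sum_comp σ (fun k => K (Z (σ i), Z k))]

theorem ContinuousLinearMap.apply_meanField_castLE {N j : ℕ} (hjN : j ≤ N)
    (ℓ : (Fin j → E) →L[ℝ] ℝ) (K : E × E → E) (Y : Fin N → E) :
    ℓ (fun i => meanField K N Y (Fin.castLE hjN i)) =
      (N : ℝ)⁻¹ * ∑ l : Fin j, ∑ k : Fin N, ℓ (Pi.single l (K (Y (Fin.castLE hjN l), Y k))) := by
  conv_lhs => rw [← Finset.univ_sum_single (fun i => meanField K N Y (Fin.castLE hjN i))]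
  simp only [meanField, ← LinearMap.coe_single ℝ (fun _ : Fin j => E), map_smul, map_sum,
    smul_eq_mul, Finset.mul_sum]

end MeanField

section Flow

variable {X : Type*} [NormedAddCommGroup X] [NormedSpace ℝ X] {V : X → X} {Lk : ℝ≥0}

theorem dist_le_mul_exp_of_hasDerivAt_of_nonneg (hV : LipschitzWith Lk V) {f g : ℝ → X}
    (hf : ∀ t, HasDerivAt f (V (f t)) t) (hg : ∀ t, HasDerivAt g (V (g t)) t)
    {s : ℝ} (hs : 0 ≤ s) : dist (f s) (g s) ≤ dist (f 0) (g 0) * exp (Lk * s) := by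
  simpa using dist_le_of_trajectories_ODE (v := fun _ => V) (fun _ => hV)
    (fun t _ => (hf t).continuousAt.continuousWithinAt) (fun t _ => (hf t).hasDerivWithinAt)
    (fun t _ => (hg t).continuousAt.continuousWithinAt) (fun t _ => (hg t).hasDerivWithinAt)
    le_rfl s ⟨hs, le_rfl⟩

theorem dist_le_mul_exp_of_hasDerivAt (hV : LipschitzWith Lk V) {f g : ℝ → X}
    (hf : ∀ t, HasDerivAt f (V (f t)) t) (hg : ∀ t, HasDerivAt g (V (g t)) t) (s : ℝ) :
    dist (f s) (g s) ≤ dist (f 0) (g 0) * exp (Lk * |s|) := by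
  rcases le_total 0 s with hs | hs
  · rw [abs_of_nonneg hs]
    exact dist_le_mul_exp_of_hasDerivAt_of_nonneg hV hf hg hs
  · have hrev : ∀ {h : ℝ → X}, (∀ t, HasDerivAt h (V (h t)) t) →
        ∀ t, HasDerivAt (fun u => h (-u)) (-V (h (-t))) t := fun hh t => by
      simpa [Function.comp_def] using (hh (-t)).scomp t (hasDerivAt_neg t)
    have := dist_le_mul_exp_of_hasDerivAt_of_nonneg hV.neg (hrev hf) (hrev hg) (neg_nonneg.2 hs)
    simpa [abs_of_nonpos hs] using this

variable {T : ℝ → X → X}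

theorem dist_flow_le (hV : LipschitzWith Lk V) (hT : ∀ Z t, HasDerivAt (T · Z) (V (T t Z)) t)
    (hT0 : ∀ Z, T 0 Z = Z) (s : ℝ) (Z Z' : X) :
    dist (T s Z) (T s Z') ≤ exp (Lk * |s|) * dist Z Z' := by
  simpa [hT0, mul_comm] using dist_le_mul_exp_of_hasDerivAt hV (hT Z) (hT Z') s

theorem lipschitzWith_flow (hV : LipschitzWith Lk V)
    (hT : ∀ Z t, HasDerivAt (T · Z) (V (T t Z)) t) (hT0 : ∀ Z, T 0 Z = Z) (s : ℝ) :
    LipschitzWith (exp (Lk * |s|)).toNNReal (T s) :=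
  LipschitzWith.of_dist_le' (dist_flow_le hV hT hT0 s)

theorem flow_map_eq_map_flow (hV : LipschitzWith Lk V)
    (hT : ∀ Z t, HasDerivAt (T · Z) (V (T t Z)) t) (hT0 : ∀ Z, T 0 Z = Z)
    (P : X →L[ℝ] X) (hP : ∀ x, V (P x) = P (V x)) (s : ℝ) (Z : X) :
    T s (P Z) = P (T s Z) := by
  have hPT : ∀ t, HasDerivAt (fun u => P (T u Z)) (V (P (T t Z))) t := fun t => by
    rw [hP]; exact P.hasFDerivAt.comp_hasDerivAt t (hT Z t)
  have := dist_le_mul_exp_of_hasDerivAt hV (hT (P Z)) hPT s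
  rw [hT0, hT0, dist_self, zero_mul] at this
  exact dist_le_zero.1 this

theorem exists_norm_flow_le (hV : LipschitzWith Lk V)
    (hT : ∀ Z t, HasDerivAt (T · Z) (V (T t Z)) t) (hT0 : ∀ Z, T 0 Z = Z) (t : ℝ) :
    ∃ M c : ℝ, ∀ Z, ∀ s ∈ Metric.closedBall t 1, ‖T s Z‖ ≤ M + c * ‖Z‖ := by
  obtain ⟨M, hM⟩ := (isCompact_closedBall t 1).exists_bound_of_continuousOn
    (fun s _ => (hT 0 s).continuousAt.continuousWithinAt)
  refine ⟨M, exp (Lk * (|t| + 1)), fun Z s hs => ?_⟩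
  have hs' : |s| ≤ |t| + 1 := by
    have := abs_sub_abs_le_abs_sub s t
    rw [Metric.mem_closedBall, Real.dist_eq] at hs
    linarith
  calc ‖T s Z‖ ≤ ‖T s 0‖ + dist (T s Z) (T s 0) := by
        rw [dist_eq_norm]; exact norm_le_norm_add_norm_sub' _ _
    _ ≤ M + exp (Lk * (|t| + 1)) * ‖Z‖ := by
      gcongr
      · exact hM s hs
      · exact (dist_flow_le hV hT hT0 s Z 0).trans (by simp only [dist_zero_right]; gcongr)

end Flow

section Transport

variable {X : Type*} [NormedAddCommGroup X] [NormedSpace ℝ X] [MeasurableSpace X] [BorelSpace X]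
  {V : X → X} {Lk : ℝ≥0} {T : ℝ → X → X}

/-- Weak form of the Liouville equation `∂_t (T_t#μ) + div (V (T_t#μ)) = 0`. -/
theorem hasDerivAt_integral_comp_flow (hV : LipschitzWith Lk V)
    (hT : ∀ Z t, HasDerivAt (T · Z) (V (T t Z)) t) (hT0 : ∀ Z, T 0 Z = Z)
    {μ : Measure X} [IsFiniteMeasure μ] (hμ : Integrable id μ)
    {ψ : X → ℝ} (hψ : ContDiff ℝ 1 ψ) (hψb : ∃ C, ∀ x, |ψ x| ≤ C)
    (hψ' : ∃ C, ∀ x, ‖fderiv ℝ ψ x‖ ≤ C) (t : ℝ) :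
    HasDerivAt (fun s => ∫ Z, ψ (T s Z) ∂μ) (∫ Z, fderiv ℝ ψ (T t Z) (V (T t Z)) ∂μ) t := by
  obtain ⟨Cψ, hCψ⟩ := hψb
  obtain ⟨C', hC'⟩ := hψ'
  obtain ⟨M, c, hMc⟩ := exists_norm_flow_le hV hT hT0 t
  have hTc := fun s => (lipschitzWith_flow hV hT hT0 s).continuous
  have hDψ : Continuous (fderiv ℝ ψ) := hψ.continuous_fderiv one_ne_zero
  have hbound : ∀ Z, ∀ s ∈ Metric.ball t 1,
      ‖fderiv ℝ ψ (T s Z) (V (T s Z))‖ ≤ C' * (‖V 0‖ + Lk * (M + c * ‖Z‖)) := fun Z s hs =>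
    calc ‖fderiv ℝ ψ (T s Z) (V (T s Z))‖ ≤ C' * ‖V (T s Z)‖ :=
          (ContinuousLinearMap.le_opNorm _ _).trans (by gcongr; exact hC' _)
      _ ≤ C' * (‖V 0‖ + Lk * (M + c * ‖Z‖)) := by
          have hTs := hMc Z s (Metric.ball_subset_closedBall hs)
          have : 0 ≤ C' := (norm_nonneg _).trans (hC' 0)
          gcongr
          exact (hV.norm_le_norm_zero_add (T s Z)).trans (by gcongr)
  refine (hasDerivAt_integral_of_dominated_loc_of_deriv_le (Metric.ball_mem_nhds t one_pos)
    (.of_forall fun s => (hψ.continuous.comp (hTc s)).aestronglyMeasurable)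
    ((integrable_const Cψ).mono' (hψ.continuous.comp (hTc t)).aestronglyMeasurable
      (.of_forall fun Z => (Real.norm_eq_abs _).trans_le (hCψ _)))
    ((hDψ.comp (hTc t)).clm_apply (hV.continuous.comp (hTc t))).aestronglyMeasurable
    (.of_forall hbound)
    (((integrable_const _).add
      (((integrable_const M).add (hμ.norm.const_mul c)).const_mul _)).const_mul _)
    (.of_forall fun Z s _ =>
      (hψ.differentiable one_ne_zero _).hasFDerivAt.comp_hasDerivAt s (hT Z s))).2

theorem hasDerivAt_integral_map_flow (hV : LipschitzWith Lk V)
    (hT : ∀ Z t, HasDerivAt (T · Z) (V (T t Z)) t) (hT0 : ∀ Z, T 0 Z = Z)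
    {μ : Measure X} [IsFiniteMeasure μ] (hμ : Integrable id μ)
    {W : Type*} [NormedAddCommGroup W] [NormedSpace ℝ W] [MeasurableSpace W] [BorelSpace W]
    (P : X →L[ℝ] W) {φ : W → ℝ} (hφ : ContDiff ℝ 1 φ) (hφb : ∃ C, ∀ w, |φ w| ≤ C)
    (hφ' : ∃ C, ∀ w, ‖fderiv ℝ φ w‖ ≤ C) (t : ℝ) :
    HasDerivAt (fun s => ∫ w, φ w ∂((μ.map (T s)).map P))
      (∫ Y, fderiv ℝ φ (P Y) (P (V Y)) ∂(μ.map (T t))) t := by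
  obtain ⟨C, hC⟩ := hφb
  obtain ⟨C', hC'⟩ := hφ'
  have hTc := fun s => (lipschitzWith_flow hV hT hT0 s).continuous
  have hφc := hφ.continuous
  have hfderiv : ∀ Y, fderiv ℝ (φ ∘ P) Y = (fderiv ℝ φ (P Y)).comp P := fun Y =>
    (fderiv_comp Y (hφ.differentiable one_ne_zero _) P.differentiableAt).trans
      (by rw [P.fderiv])
  convert hasDerivAt_integral_comp_flow hV hT hT0 hμ (hφ.comp P.contDiff) ⟨C, fun _ => hC _⟩
    ⟨C' * ‖P‖, fun Y => by
      rw [hfderiv]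
      exact (ContinuousLinearMap.opNorm_comp_le _ _).trans (by gcongr; exact hC' _)⟩ t using 1
  · funext s
    exact (integral_map P.continuous.aemeasurable hφc.aestronglyMeasurable).trans
      (integral_map (hTc s).aemeasurable (hφc.comp P.continuous).aestronglyMeasurable)
  · refine (integral_map (hTc t).aemeasurable ?_).trans
      (integral_congr_ae (.of_forall fun Z => ?_))
    · exact (((hφ.continuous_fderiv one_ne_zero).comp P.continuous).clm_apply
        (P.continuous.comp hV.continuous)).aestronglyMeasurable
    · simp only [hfderiv]
      rfl

theorem integrable_id_map_flow (hV : LipschitzWith Lk V)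
    (hT : ∀ Z t, HasDerivAt (T · Z) (V (T t Z)) t) (hT0 : ∀ Z, T 0 Z = Z)
    [SecondCountableTopology X] {μ : Measure X} [IsFiniteMeasure μ] (hμ : Integrable id μ)
    (t : ℝ) : Integrable id (μ.map (T t)) :=
  (integrable_map_measure aestronglyMeasurable_id
    (lipschitzWith_flow hV hT hT0 t).continuous.aemeasurable).2
    ((lipschitzWith_flow hV hT hT0 t).integrable_comp hμ)

end Transport

section Symmetric

variable {d N : ℕ}

local notation "E" => EuclideanSpace ℝ (Fin d)

theorem IsSymmetricMeasure.map_of_comp_perm {F : Measure (Fin N → E)} (hF : IsSymmetricMeasure F)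
    {T : (Fin N → E) → Fin N → E} (hT : Measurable T)
    (hTσ : ∀ (σ : Equiv.Perm (Fin N)) Z, T (fun i => Z (σ i)) = fun i => T Z (σ i)) :
    IsSymmetricMeasure (F.map T) := fun σ => by
  have hσ : Measurable fun (Z : Fin N → E) i => Z (σ i) := by fun_prop
  have hcomm : (fun Z i => Z (σ i)) ∘ T = T ∘ fun Z i => Z (σ i) :=
    funext fun Z => (hTσ σ Z).symm
  rw [Measure.map_map hσ hT, hcomm, ← Measure.map_map hT hσ, hF σ]

theorem IsSymmetricMeasure.map_comp_perm {P : Measure (Fin N → E)} (hP : IsSymmetricMeasure P)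
    (σ : Equiv.Perm (Fin N)) {m : ℕ} (ι : Fin m → Fin N) :
    P.map (fun Y i => Y (σ (ι i))) = P.map (fun Y i => Y (ι i)) := by
  have hσ : Measurable fun (Z : Fin N → E) i => Z (σ i) := by fun_prop
  have hι : Measurable fun (Z : Fin N → E) i => Z (ι i) := by fun_prop
  conv_rhs => rw [← hP σ, Measure.map_map hι hσ]
  rfl

theorem IsSymmetricMeasure.integral_comp_castLE_apply {P : Measure (Fin N → E)}
    (hP : IsSymmetricMeasure P) {j : ℕ} (hjN : j + 1 ≤ N) {g : (Fin j → E) → E → ℝ}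
    (hg : Continuous fun p : (Fin j → E) × E => g p.1 p.2) {k : Fin N} (hk : j ≤ k) :
    ∫ Y, g (fun i => Y (Fin.castLE (Nat.le_of_succ_le hjN) i)) (Y k) ∂P =
      ∫ w, g (fun i => w (Fin.castSucc i)) (w (Fin.last j))
        ∂(P.map fun Z (i : Fin (j + 1)) => Z (Fin.castLE hjN i)) := by
  set σ := Equiv.swap k ⟨j, hjN⟩
  have hfix : ∀ i : Fin j, σ (Fin.castLE hjN i.castSucc) = Fin.castLE (Nat.le_of_succ_le hjN) i :=
    fun i => Equiv.swap_apply_of_ne_of_ne (Fin.ne_of_val_ne (by simp; omega))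
      (Fin.ne_of_val_ne (by simp; omega))
  have hlast : σ (Fin.castLE hjN (Fin.last j)) = k := Equiv.swap_apply_right _ _
  rw [← hP.map_comp_perm σ]
  symm
  refine (integral_map (Measurable.aemeasurable (by fun_prop)) ?_).trans ?_
  · exact (hg.comp (f := fun w : Fin (j + 1) → E => (fun i => w i.castSucc, w (Fin.last j)))
      (by fun_prop)).aestronglyMeasurable
  · simp only [hfix, hlast]

theorem IsSymmetricMeasure.integral_fderiv_meanField {P : Measure (Fin N → E)}
    (hP : IsSymmetricMeasure P) {K : E × E → E} (hK : Continuous K)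
    (hKint : ∀ a b : Fin N, Integrable (fun Y => K (Y a, Y b)) P)
    {j : ℕ} (hjN : j + 1 ≤ N) {φ : (Fin j → E) → ℝ} (hφ : Continuous (fderiv ℝ φ))
    (hφ' : ∃ C, ∀ w, ‖fderiv ℝ φ w‖ ≤ C) :
    ∫ Y, fderiv ℝ φ (fun i => Y (Fin.castLE (Nat.le_of_succ_le hjN) i))
        (fun i => meanField K N Y (Fin.castLE (Nat.le_of_succ_le hjN) i)) ∂P =
      (N : ℝ)⁻¹ * ∑ k : Fin j, ∑ l : Fin j,
          ∫ w, fderiv ℝ φ w (Pi.single l (K (w l, w k)))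
            ∂(P.map fun Z (i : Fin j) => Z (Fin.castLE (Nat.le_of_succ_le hjN) i)) +
        ((N : ℝ) - j) / N * ∑ l : Fin j,
          ∫ w, fderiv ℝ φ (fun i => w (Fin.castSucc i))
              (Pi.single l (K (w (Fin.castSucc l), w (Fin.last j))))
            ∂(P.map fun Z (i : Fin (j + 1)) => Z (Fin.castLE hjN i)) := by
  set h := Nat.le_of_succ_le hjN
  obtain ⟨C, hC⟩ := hφ'
  have hcont : ∀ {α : Type} [TopologicalSpace α] {u : α → Fin j → E} {x : α → E} (l : Fin j),
      Continuous u → Continuous x → Continuous fun w => fderiv ℝ φ (u w) (Pi.single l (x w)) :=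
    fun l hu hx => (hφ.comp hu).clm_apply ((continuous_single l).comp hx)
  set A : Fin j → Fin N → ℝ := fun l k => ∫ Y, fderiv ℝ φ (fun i => Y (Fin.castLE h i))
    (Pi.single l (K (Y (Fin.castLE h l), Y k))) ∂P
  have hint : ∀ l k, Integrable (fun Y => fderiv ℝ φ (fun i => Y (Fin.castLE h i))
      (Pi.single l (K (Y (Fin.castLE h l), Y k)))) P := fun l k =>
    ((hKint (Fin.castLE h l) k).norm.const_mul C).mono'
      (hcont l (by fun_prop) (by fun_prop)).aestronglyMeasurable (.of_forall fun Y =>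
      (ContinuousLinearMap.le_opNorm _ _).trans (by rw [Pi.norm_single]; gcongr; exact hC _))
  have hlow : ∀ l k, A l (Fin.castLE h k) = ∫ w, fderiv ℝ φ w (Pi.single l (K (w l, w k)))
      ∂(P.map fun Z (i : Fin j) => Z (Fin.castLE h i)) := fun l k => by
    symm
    exact integral_map (Measurable.aemeasurable (by fun_prop))
      (hcont l (by fun_prop) (by fun_prop)).aestronglyMeasurable
  have hhigh : ∀ l (k : Fin N), j ≤ k → A l k = ∫ w, fderiv ℝ φ (fun i => w (Fin.castSucc i))
        (Pi.single l (K (w (Fin.castSucc l), w (Fin.last j))))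
      ∂(P.map fun Z (i : Fin (j + 1)) => Z (Fin.castLE hjN i)) := fun l k hk =>
    hP.integral_comp_castLE_apply hjN (g := fun w x => fderiv ℝ φ w (Pi.single l (K (w l, x))))
      (hcont l continuous_fst (by fun_prop)) hk
  calc _ = ∫ Y, (N : ℝ)⁻¹ * ∑ l : Fin j, ∑ k : Fin N, fderiv ℝ φ (fun i => Y (Fin.castLE h i))
        (Pi.single l (K (Y (Fin.castLE h l), Y k))) ∂P := by
        simp only [ContinuousLinearMap.apply_meanField_castLE]
    _ = (N : ℝ)⁻¹ * ∑ l : Fin j, ∑ k : Fin N, A l k := by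
        rw [integral_const_mul, integral_finsetSum _ fun l _ => integrable_finsetSum _
          fun k _ => hint l k]
        simp only [integral_finsetSum _ fun k _ => hint _ k, A]
    _ = (N : ℝ)⁻¹ * ∑ l : Fin j,
          (∑ k : Fin j, A l (Fin.castLE h k) + (N - j) • A l ⟨j, hjN⟩) := by
        congr 1
        refine Finset.sum_congr rfl fun l _ => Fin.sum_univ_eq_sum_castLE_add_nsmul hjN _
          fun k hk => (hhigh l k hk).trans (hhigh l _ le_rfl).symm
    _ = _ := by
        simp only [hlow, hhigh _ ⟨j, hjN⟩ le_rfl, Finset.sum_add_distrib, nsmul_eq_mul,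
          Nat.cast_sub h]
        rw [Finset.sum_comm, ← Finset.mul_sum]
        ring

end Symmetric

theorem stmt12_general (d : ℕ) (L : ℝ)
    (K : EuclideanSpace ℝ (Fin d) × EuclideanSpace ℝ (Fin d) → EuclideanSpace ℝ (Fin d))
    (hK : ContDiff ℝ 1 K)
    (hK2 : (∀ z z' : EuclideanSpace ℝ (Fin d), ‖fderiv ℝ (fun w => K (w, z')) z‖ ≤ L) ∧
           (∀ z z' : EuclideanSpace ℝ (Fin d), ‖fderiv ℝ (fun w => K (z, w)) z'‖ ≤ L))
    (N : ℕ)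
    -- the flow of the N-particle ODE system
    (T : ℝ → (Fin N → EuclideanSpace ℝ (Fin d)) → (Fin N → EuclideanSpace ℝ (Fin d)))
    (hT0 : ∀ Z, T 0 Z = Z)
    (hTode : ∀ Z t, HasDerivAt (fun s => T s Z)
      (fun i => (N : ℝ)⁻¹ • ∑ j : Fin N, K (T t Z i, T t Z j)) t)
    -- the initial N-particle distribution
    (F : Measure (Fin N → EuclideanSpace ℝ (Fin d)))
    (hFprob : IsProbabilityMeasure F) (hFsym : IsSymmetricMeasure F)
    (hFmom : (∫⁻ Z, ∑ i : Fin N, (‖Z i‖₊ : ℝ≥0∞) ∂F) ≠ ⊤)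
    (j : ℕ) (hjN : j + 1 ≤ N)
    (φ : (Fin j → EuclideanSpace ℝ (Fin d)) → ℝ)
    (hφ : ContDiff ℝ 1 φ) (hφbd : ∃ C : ℝ, ∀ w, |φ w| ≤ C)
    (hφ'bd : ∃ C : ℝ, ∀ w, ‖fderiv ℝ φ w‖ ≤ C) :
    -- the j-th equation of the BBGKY hierarchy, in weak form
    (∀ t : ℝ,
      HasDerivAt
        (fun s => ∫ w, φ w ∂(Measure.map
          (fun Z (i : Fin j) => Z (Fin.castLE (Nat.le_of_succ_le hjN) i))
          (Measure.map (T s) F)))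
        ((N : ℝ)⁻¹ *
          ∑ k : Fin j, ∑ l : Fin j,
            ∫ w, fderiv ℝ φ w (Pi.single l (K (w l, w k)))
              ∂(Measure.map
                (fun Z (i : Fin j) => Z (Fin.castLE (Nat.le_of_succ_le hjN) i))
                (Measure.map (T t) F)) +
         ((N : ℝ) - j) / N *
          ∑ l : Fin j,
            ∫ w, fderiv ℝ φ (fun i => w (Fin.castSucc i))
                (Pi.single l (K (w (Fin.castSucc l), w (Fin.last j))))
              ∂(Measure.map
                (fun Z (i : Fin (j + 1)) => Z (Fin.castLE hjN i))
                (Measure.map (T t) F))) t) ∧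
    -- the initial condition F_{N:j}(0) = F^in_{N:j}
    (Measure.map (fun Z (i : Fin j) => Z (Fin.castLE (Nat.le_of_succ_le hjN) i))
        (Measure.map (T 0) F) =
      Measure.map (fun Z (i : Fin j) => Z (Fin.castLE (Nat.le_of_succ_le hjN) i)) F) := by
  have hKlip := lipschitzWith_of_norm_partialFDeriv_le (hK.differentiable one_ne_zero) hK2
  have hV := lipschitzWith_meanField hKlip N
  have hFint := integrable_id_of_lintegral_sum_nnnorm_ne_top hFmom
  refine ⟨fun t => ?_, by rw [show T 0 = id from funext hT0, Measure.map_id]⟩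
  have hsym : IsSymmetricMeasure (F.map (T t)) :=
    hFsym.map_of_comp_perm (lipschitzWith_flow hV hTode hT0 t).continuous.measurable
      fun σ Z => flow_map_eq_map_flow hV hTode hT0
        (ContinuousLinearMap.pi fun i => ContinuousLinearMap.proj (σ i))
        (meanField_comp_perm K σ) t Z
  have hPint := integrable_id_map_flow hV hTode hT0 hFint t
  rw [← hsym.integral_fderiv_meanField hKlip.continuous
    (fun a b => hKlip.integrable_comp ((hPint.eval a).prodMk (hPint.eval b))) hjN
    (hφ.continuous_fderiv one_ne_zero) hφ'bd]
  exact hasDerivAt_integral_map_flow hV hTode hT0 hFint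
    (ContinuousLinearMap.pi fun i => ContinuousLinearMap.proj (Fin.castLE _ i)) hφ hφbd hφ'bd t

/-- classical BBGKY hierarchy: if `F_N(t) = T_t#F_N^in` where `T_t`
is the `N`-particle flow and `F_N^in` is a symmetric probability measure with
finite first moment, then for each `1 ≤ j ≤ N-1` and each `φ ∈ C¹_b((ℝ^d)^j)`,
`d/dt ∫ φ dF_{N:j}(t) = (1/N) ∑_{k,l≤j} ∫ K(z_l,z_k)·∇_{z_l}φ dF_{N:j}(t)
 + ((N−j)/N) ∑_{l≤j} ∫ K(z_l,z_{j+1})·∇_{z_l}φ dF_{N:j+1}(t)`,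
with initial conditions `F_{N:j}(0) = F^in_{N:j}`. -/
theorem stmt12 (d : ℕ) (L : ℝ) (hL : 0 ≤ L)
    (K : EuclideanSpace ℝ (Fin d) × EuclideanSpace ℝ (Fin d) → EuclideanSpace ℝ (Fin d))
    (hK : ContDiff ℝ 1 K)
    (hK1 : ∀ z z' : EuclideanSpace ℝ (Fin d), K (z, z') = - K (z', z))
    (hK2 : (∀ z z' : EuclideanSpace ℝ (Fin d), ‖fderiv ℝ (fun w => K (w, z')) z‖ ≤ L) ∧
           (∀ z z' : EuclideanSpace ℝ (Fin d), ‖fderiv ℝ (fun w => K (z, w)) z'‖ ≤ L))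
    (N : ℕ) (hN : 1 ≤ N)
    -- the flow of the N-particle ODE system
    (T : ℝ → (Fin N → EuclideanSpace ℝ (Fin d)) → (Fin N → EuclideanSpace ℝ (Fin d)))
    (hTmeas : ∀ t, Measurable (T t))
    (hT0 : ∀ Z, T 0 Z = Z)
    (hTode : ∀ Z t, HasDerivAt (fun s => T s Z)
      (fun i => (N : ℝ)⁻¹ • ∑ j : Fin N, K (T t Z i, T t Z j)) t)
    -- the initial N-particle distribution
    (F : Measure (Fin N → EuclideanSpace ℝ (Fin d)))
    (hFprob : IsProbabilityMeasure F) (hFsym : IsSymmetricMeasure F)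
    (hFmom : (∫⁻ Z, ∑ i : Fin N, (‖Z i‖₊ : ℝ≥0∞) ∂F) ≠ ⊤)
    (j : ℕ) (hj : 1 ≤ j) (hjN : j + 1 ≤ N)
    (φ : (Fin j → EuclideanSpace ℝ (Fin d)) → ℝ)
    (hφ : ContDiff ℝ 1 φ) (hφbd : ∃ C : ℝ, ∀ w, |φ w| ≤ C)
    (hφ'bd : ∃ C : ℝ, ∀ w, ‖fderiv ℝ φ w‖ ≤ C) :
    -- the j-th equation of the BBGKY hierarchy, in weak form
    (∀ t : ℝ,
      HasDerivAt
        (fun s => ∫ w, φ w ∂(Measure.map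
          (fun Z (i : Fin j) => Z (Fin.castLE (Nat.le_of_succ_le hjN) i))
          (Measure.map (T s) F)))
        ((N : ℝ)⁻¹ *
          ∑ k : Fin j, ∑ l : Fin j,
            ∫ w, fderiv ℝ φ w (Pi.single l (K (w l, w k)))
              ∂(Measure.map
                (fun Z (i : Fin j) => Z (Fin.castLE (Nat.le_of_succ_le hjN) i))
                (Measure.map (T t) F)) +
         ((N : ℝ) - j) / N *
          ∑ l : Fin j,
            ∫ w, fderiv ℝ φ (fun i => w (Fin.castSucc i))
                (Pi.single l (K (w (Fin.castSucc l), w (Fin.last j))))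
              ∂(Measure.map
                (fun Z (i : Fin (j + 1)) => Z (Fin.castLE hjN i))
                (Measure.map (T t) F))) t) ∧
    -- the initial condition F_{N:j}(0) = F^in_{N:j}
    (Measure.map (fun Z (i : Fin j) => Z (Fin.castLE (Nat.le_of_succ_le hjN) i))
        (Measure.map (T 0) F) =
      Measure.map (fun Z (i : Fin j) => Z (Fin.castLE (Nat.le_of_succ_le hjN) i)) F) :=
  stmt12_general d L K hK hK2 N T hT0 hTode F hFprob hFsym hFmom j hjN φ hφ hφbd hφ'bd
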